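/- arXiv:1005.1334 — 2 statements merged into one kernel-verified Lean document; each statement's English description precedes it below -/
import Mathlib

section
/- Let α > 0, ζ ∈ ℝ, and define f₁(v) = ₁F₂(ζ/4; 1/2, 3/4; v⁴/(16α)) for v ∈ ℝ, where ₁F₂(a; b₁, b₂; z) = ∑_{n≥0} (a)ₙ zⁿ / ((b₁)ₙ (b₂)ₙ n!). Then f₁ satisfies the third-order ODE α·f₁'''(v) − v²·f₁'(v) − ζ·v·f₁(v) = 0 for all v ∈ ℝ. -/
open Real

/-- Pochhammer symbol `(a)ₙ = a(a+1)⋯(a+n-1)`. -/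
noncomputable def poch (a : ℝ) (n : ℕ) : ℝ := ∏ i ∈ Finset.range n, (a + i)

/-- The generalized hypergeometric function `₁F₂(a; b₁, b₂; z)`. -/
noncomputable def oneF2 (a b₁ b₂ z : ℝ) : ℝ :=
  ∑' n : ℕ, poch a n * z ^ n / (poch b₁ n * poch b₂ n * (n.factorial : ℝ))

/-!
Write `f₁ v = ∑ₖ cₖ vᵏ` with `c₄ₙ = (ζ/4)ₙ / ((1/2)ₙ (3/4)ₙ n! (16α)ⁿ)` and `cₖ = 0` for `4 ∤ k`.
By the ratio test this power series converges on all of `ℝ`, so it can be differentiated termwise,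
and the ODE becomes the coefficient recurrence `α (k+2)(k+3)(k+4) cₖ₊₄ = (k + ζ) cₖ` together
with `c₃ = 0`. The recurrence is the Pochhammer identity `(a)ₙ₊₁ = (a)ₙ (a + n)` in disguise.
-/

open Filter Topology Finset

def IsEntireCoeffs (c : ℕ → ℝ) : Prop := ∀ R : ℝ, Summable fun k => |c k| * R ^ k

noncomputable def powerSum (c : ℕ → ℝ) (x : ℝ) : ℝ := ∑' k, c k * x ^ k

def derivCoeffs (c : ℕ → ℝ) (k : ℕ) : ℝ := (k + 1) * c (k + 1)

namespace IsEntireCoeffs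

variable {c : ℕ → ℝ}

theorem summable (hc : IsEntireCoeffs c) (x : ℝ) : Summable fun k => c k * x ^ k :=
  .of_norm_bounded (hc |x|) fun k => by rw [norm_mul, norm_pow, norm_eq_abs, norm_eq_abs]

theorem derivCoeffs (hc : IsEntireCoeffs c) : IsEntireCoeffs (derivCoeffs c) := by
  intro R
  set S := 2 * (|R| + 1)
  refine .of_norm_bounded ((summable_nat_add_iff 1).2 (hc S)) fun k => ?_
  have hk : ((k : ℝ) + 1) ≤ 2 ^ k := by exact_mod_cast Nat.lt_two_pow_self
  have hS : (k + 1 : ℝ) * |R| ^ k ≤ S ^ (k + 1) :=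
    calc (k + 1 : ℝ) * |R| ^ k ≤ 2 ^ k * (|R| + 1) ^ k := by gcongr; linarith
      _ = S ^ k := by rw [mul_pow]
      _ ≤ S ^ (k + 1) := pow_le_pow_right₀ (by linarith [abs_nonneg R]) k.le_succ
  rw [norm_mul, norm_pow, norm_abs_eq_norm, norm_eq_abs, norm_eq_abs, _root_.derivCoeffs,
    abs_mul, abs_of_nonneg (by positivity : (0 : ℝ) ≤ k + 1)]
  calc (k + 1 : ℝ) * |c (k + 1)| * |R| ^ k = |c (k + 1)| * ((k + 1 : ℝ) * |R| ^ k) := by ring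
    _ ≤ |c (k + 1)| * S ^ (k + 1) := by gcongr

theorem hasDerivAt_powerSum (hc : IsEntireCoeffs c) (x : ℝ) :
    HasDerivAt (powerSum c) (powerSum (_root_.derivCoeffs c) x) x := by
  have hsplit : powerSum c = fun y => c 0 + ∑' k, c (k + 1) * y ^ (k + 1) := funext fun y => by
    rw [powerSum, (hc.summable y).tsum_eq_zero_add, pow_zero, mul_one]
  set R := |x| + 1
  have hx : x ∈ Metric.ball (0 : ℝ) R := by simp [R]
  rw [hsplit]
  refine (hasDerivAt_tsum_of_isPreconnected (g := fun k y => c (k + 1) * y ^ (k + 1))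
    (g' := fun k y => _root_.derivCoeffs c k * y ^ k) (hc.derivCoeffs R) Metric.isOpen_ball
    (convex_ball 0 R).isPreconnected (fun k y _ => ?_) (fun k y hy => ?_) hx
    ((summable_nat_add_iff 1).2 (hc.summable x)) hx).const_add (c 0)
  · refine ((hasDerivAt_pow (k + 1) y).const_mul (c (k + 1))).congr_deriv ?_
    rw [_root_.derivCoeffs, Nat.add_sub_cancel, Nat.cast_succ]
    ring
  · rw [norm_mul, norm_pow, norm_eq_abs, norm_eq_abs]
    have : |y| ≤ R := by simpa using (Metric.mem_ball.1 hy).le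
    gcongr

theorem deriv_powerSum (hc : IsEntireCoeffs c) :
    deriv (powerSum c) = powerSum (_root_.derivCoeffs c) :=
  funext fun x => (hc.hasDerivAt_powerSum x).deriv

end IsEntireCoeffs

theorem HasSum.sub_nat_add {G : Type*} [AddCommGroup G] [TopologicalSpace G]
    [IsTopologicalAddGroup G] {f : ℕ → G} {a : G} (hf : HasSum f a) (k : ℕ) :
    HasSum (fun n => f n - f (n + k)) (∑ i ∈ range k, f i) := by
  simpa using hf.sub ((hasSum_nat_add_iff' k).2 hf)

theorem IsEntireCoeffs.ode {c : ℕ → ℝ} (hc : IsEntireCoeffs c) {α ζ : ℝ}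
    (hrec : ∀ k : ℕ, α * ((k + 2) * (k + 3) * (k + 4)) * c (k + 4) = (k + ζ) * c k)
    (h3 : c 3 = 0) (v : ℝ) :
    α * deriv (deriv (deriv (powerSum c))) v - v ^ 2 * deriv (powerSum c) v
      - ζ * v * powerSum c v = 0 := by
  -- `b (k + 3)` is the `k`-th term of `α f'''`; by the recurrence, the term of `v² f' + ζ v f`
  -- carrying `c m` is `b (m + 4)`, so the series telescopes.
  set b : ℕ → ℝ := fun m => α * (m * (m - 1) * (m - 2) * c m) * v ^ (m - 3) with hb
  have hc1 := hc.derivCoeffs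
  have hc2 := hc1.derivCoeffs
  have hD3 : HasSum b (α * deriv (deriv (deriv (powerSum c))) v) := by
    rw [hc.deriv_powerSum, hc1.deriv_powerSum, hc2.deriv_powerSum, ← hasSum_nat_add_iff' 3,
      show ∑ i ∈ range 3, b i = 0 by simp [hb, sum_range_succ], sub_zero]
    refine ((hc2.derivCoeffs.summable v).hasSum.mul_left α).congr_fun fun k => ?_
    simp only [hb, _root_.derivCoeffs, Nat.add_sub_cancel, Nat.cast_add, Nat.cast_ofNat]
    ring
  have hD1 : HasSum (fun m : ℕ => m * c m * v ^ (m + 1)) (v ^ 2 * deriv (powerSum c) v) := by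
    rw [hc.deriv_powerSum, ← hasSum_nat_add_iff' 1,
      show ∑ i ∈ range 1, (i : ℝ) * c i * v ^ (i + 1) = 0 by simp, sub_zero]
    refine ((hc1.summable v).hasSum.mul_left (v ^ 2)).congr_fun fun k => ?_
    simp only [_root_.derivCoeffs, Nat.cast_add, Nat.cast_one]
    ring
  have hD0 : HasSum (fun m : ℕ => ζ * c m * v ^ (m + 1)) (ζ * v * powerSum c v) :=
    ((hc.summable v).hasSum.mul_left (ζ * v)).congr_fun fun k => by ring
  have htel : HasSum (fun m => b m - b (m + 4)) 0 := by
    have hb03 : ∑ i ∈ range 4, b i = 0 := by simp [hb, sum_range_succ, h3]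
    simpa only [hb03] using hD3.sub_nat_add 4
  refine ((hD3.sub hD1).sub hD0).unique (htel.congr_fun fun m => ?_)
  have hb4 : b (m + 4) = (m + ζ) * c m * v ^ (m + 1) := by
    rw [← hrec]
    simp only [hb, Nat.cast_add, Nat.cast_ofNat, show m + 4 - 3 = m + 1 by omega]
    ring
  rw [hb4]
  ring

theorem poch_succ (a : ℝ) (n : ℕ) : poch a (n + 1) = poch a n * (a + n) :=
  prod_range_succ _ _

theorem poch_ne_zero {b : ℝ} (hb : ∀ n : ℕ, b + n ≠ 0) (n : ℕ) : poch b n ≠ 0 :=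
  prod_ne_zero_iff.2 fun i _ => hb i

noncomputable def oneF2Coeff (a b₁ b₂ : ℝ) (n : ℕ) : ℝ :=
  poch a n / (poch b₁ n * poch b₂ n * n.factorial)

theorem oneF2_eq_tsum (a b₁ b₂ z : ℝ) : oneF2 a b₁ b₂ z = ∑' n, oneF2Coeff a b₁ b₂ n * z ^ n :=
  tsum_congr fun _ => div_mul_eq_mul_div _ _ _ |>.symm

section oneF2Coeff

variable {a b₁ b₂ : ℝ}

theorem oneF2Coeff_succ (hb₁ : ∀ n : ℕ, b₁ + n ≠ 0) (hb₂ : ∀ n : ℕ, b₂ + n ≠ 0) (n : ℕ) :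
    oneF2Coeff a b₁ b₂ (n + 1) =
      oneF2Coeff a b₁ b₂ n * ((a + n) / ((b₁ + n) * (b₂ + n) * (n + 1))) := by
  simp only [oneF2Coeff, poch_succ, Nat.factorial_succ, Nat.cast_mul, Nat.cast_succ]
  field_simp [poch_ne_zero hb₁ n, poch_ne_zero hb₂ n, hb₁ n, hb₂ n]

theorem tendsto_oneF2Coeff_ratio (a b₁ b₂ : ℝ) :
    Tendsto (fun n : ℕ => (a + n) / ((b₁ + n) * (b₂ + n) * (n + 1))) atTop (𝓝 0) := by
  have hlin : Tendsto (fun n : ℕ => (a + 1 * n) / (1 + 1 * n)) atTop (𝓝 (1 / 1)) :=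
    tendsto_add_mul_div_add_mul_atTop_nhds a 1 1 one_ne_zero
  have hinv (b : ℝ) : Tendsto (fun n : ℕ => (b + n)⁻¹) atTop (𝓝 0) :=
    tendsto_inv_atTop_zero.comp (tendsto_atTop_add_const_left _ b tendsto_natCast_atTop_atTop)
  convert (hlin.mul (hinv b₁)).mul (hinv b₂) using 2 with n
  · field_simp
    ring
  · simp

theorem isEntireCoeffs_oneF2Coeff (hb₁ : ∀ n : ℕ, b₁ + n ≠ 0) (hb₂ : ∀ n : ℕ, b₂ + n ≠ 0) :
    IsEntireCoeffs (oneF2Coeff a b₁ b₂) := by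
  intro R
  have hρ := ((tendsto_oneF2Coeff_ratio a b₁ b₂).abs.mul_const |R|).eventually
    (gt_mem_nhds (by norm_num : |(0 : ℝ)| * |R| < 1 / 2))
  refine summable_of_ratio_norm_eventually_le (by norm_num : (1 / 2 : ℝ) < 1) ?_
  filter_upwards [hρ] with n hn
  rw [oneF2Coeff_succ hb₁ hb₂, norm_mul, norm_mul, norm_abs_eq_norm, norm_abs_eq_norm, norm_mul,
    norm_pow, norm_pow, pow_succ, norm_eq_abs, norm_eq_abs, norm_eq_abs]
  set ρ := (a + n) / ((b₁ + n) * (b₂ + n) * (n + 1))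
  calc |oneF2Coeff a b₁ b₂ n| * |ρ| * (|R| ^ n * |R|)
      = |ρ| * |R| * (|oneF2Coeff a b₁ b₂ n| * |R| ^ n) := by ring
    _ ≤ 1 / 2 * (|oneF2Coeff a b₁ b₂ n| * |R| ^ n) := by gcongr

end oneF2Coeff

/-- Coefficients of `v ↦ ∑ₙ tₙ (β vᵐ)ⁿ` as a power series in `v`. -/
noncomputable def compMonomialCoeffs (m : ℕ) (β : ℝ) (t : ℕ → ℝ) (k : ℕ) : ℝ :=
  if m ∣ k then t (k / m) * β ^ (k / m) else 0

section compMonomialCoeffs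

variable {m : ℕ} {β : ℝ} {t : ℕ → ℝ}

theorem compMonomialCoeffs_mul (hm : 0 < m) (n : ℕ) :
    compMonomialCoeffs m β t (m * n) = t n * β ^ n := by
  simp [compMonomialCoeffs, Nat.mul_div_cancel_left n hm]

theorem compMonomialCoeffs_of_not_dvd {k : ℕ} (hk : ¬ m ∣ k) : compMonomialCoeffs m β t k = 0 :=
  if_neg hk

theorem compMonomialCoeffs_eq_zero_of_notMem_range {k : ℕ} (hk : k ∉ Set.range (m * ·)) :
    compMonomialCoeffs m β t k = 0 :=
  compMonomialCoeffs_of_not_dvd fun ⟨n, hn⟩ => hk ⟨n, hn.symm⟩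

theorem powerSum_compMonomialCoeffs (hm : 0 < m) (v : ℝ) :
    powerSum (compMonomialCoeffs m β t) v = ∑' n, t n * (β * v ^ m) ^ n := by
  rw [powerSum, ← (mul_right_injective₀ hm.ne').tsum_eq fun k hk =>
    by_contra fun h => hk (by rw [compMonomialCoeffs_eq_zero_of_notMem_range h, zero_mul])]
  refine tsum_congr fun n => ?_
  rw [compMonomialCoeffs_mul hm, mul_pow, pow_mul, mul_assoc]

theorem IsEntireCoeffs.compMonomialCoeffs (ht : IsEntireCoeffs t) (hm : 0 < m) (β : ℝ) :
    IsEntireCoeffs (compMonomialCoeffs m β t) := by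
  intro R
  refine ((mul_right_injective₀ hm.ne').summable_iff fun k hk => ?_).1 ?_
  · rw [compMonomialCoeffs_eq_zero_of_notMem_range hk, abs_zero, zero_mul]
  · refine (ht (|β| * R ^ m)).congr fun n => ?_
    simp only [Function.comp_apply, compMonomialCoeffs_mul hm, abs_mul, abs_pow, mul_pow, pow_mul]
    ring

end compMonomialCoeffs

noncomputable def scalingCoeffs (α ζ : ℝ) : ℕ → ℝ :=
  compMonomialCoeffs 4 (16 * α)⁻¹ (oneF2Coeff (ζ / 4) (1 / 2) (3 / 4))

theorem isEntireCoeffs_scalingCoeffs (α ζ : ℝ) : IsEntireCoeffs (scalingCoeffs α ζ) :=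
  (isEntireCoeffs_oneF2Coeff (fun _ => by positivity) (fun _ => by positivity)).compMonomialCoeffs
    four_pos _

theorem scalingCoeffs_recurrence {α : ℝ} (hα : α ≠ 0) (ζ : ℝ) (k : ℕ) :
    α * ((k + 2) * (k + 3) * (k + 4)) * scalingCoeffs α ζ (k + 4) =
      (k + ζ) * scalingCoeffs α ζ k := by
  by_cases hk : 4 ∣ k
  · obtain ⟨n, rfl⟩ := hk
    rw [scalingCoeffs, show 4 * n + 4 = 4 * (n + 1) by ring, compMonomialCoeffs_mul (by norm_num),
      compMonomialCoeffs_mul (by norm_num),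
      oneF2Coeff_succ (fun _ => by positivity) (fun _ => by positivity)]
    push_cast
    rw [pow_succ]
    field_simp
    ring
  · have hk4 : ¬ 4 ∣ k + 4 := by omega
    simp only [scalingCoeffs, compMonomialCoeffs_of_not_dvd hk, compMonomialCoeffs_of_not_dvd hk4,
      mul_zero]

theorem stmt7 (α ζ : ℝ) (hα : 0 < α) (f₁ : ℝ → ℝ)
    (hf₁ : ∀ v : ℝ, f₁ v = oneF2 (ζ / 4) (1 / 2) (3 / 4) (v ^ 4 / (16 * α))) :
    ∀ v : ℝ,
      α * deriv (deriv (deriv f₁)) v - v ^ 2 * deriv f₁ v - ζ * v * f₁ v = 0 := by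
  have hf : f₁ = powerSum (scalingCoeffs α ζ) := funext fun v => by
    rw [hf₁, scalingCoeffs, powerSum_compMonomialCoeffs (by norm_num), oneF2_eq_tsum,
      div_eq_inv_mul (v ^ 4)]
  rw [hf]
  exact (isEntireCoeffs_scalingCoeffs α ζ).ode (scalingCoeffs_recurrence hα.ne' ζ)
    (compMonomialCoeffs_of_not_dvd (by norm_num))
end

section
/- Define P(v) = ∫₀^∞ κ^{(ζ−1)/2}·[e^{-vκ} − cos(vκ) − sin(vκ)]·K_{(ζ−1)/4}(κ²) dκ for real v and ζ > 1, where K denotes the modified Bessel function of the second kind. Then for v < 0, the integral ∫₀^∞ κ^{(ζ−1)/2} e^{|v|κ} K_{(ζ−1)/4}(κ²) dκ (the dominant term of P(v)) converges, and P(v) → +∞ as v → −∞; more precisely, P(v) ≥ C·e^{v²/8} for all sufficiently negative v and some constant C > 0. -/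
/-!
For `t ≥ 0` one has `cosh t ≥ 1/2 + eᵗ/4` and `cosh (ν t) ≤ e^{ν t}`, so the substitution
`u = eᵗ` bounds the defining integral of `K_ν(x)` by a Gamma integral:
`K_ν(x) ≤ e^{-x/2} (4/x)^ν Γ(ν)`. Hence `κ^{2ν} K_ν(κ²) ≤ 4^ν Γ(ν) e^{-κ²/2}`, which makes all
the integrals converge and bounds the oscillating part of `P(v)` by the constant
`2 ∫ κ^{2ν} K_ν(κ²)`. For the dominant part, restricting the defining integral to `t ∈ (0, 1]`
gives `K_ν(x) ≥ e^{-x cosh 1}`; integrating `κ^{2ν} e^{wκ} K_ν(κ²)` over `[w/4, w/4 + 1]`, where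
`wκ - κ² cosh 1` is close to its maximum, then gives at least `exp (w²/8 + w/2)` since
`cosh 1 < 8/5`.
-/

open Real MeasureTheory Filter

/-- The Macdonald function (modified Bessel function of the second kind), via its
standard integral representation `K_ν(x) = ∫₀^∞ e^{-x cosh t} cosh(νt) dt`. -/
noncomputable def besselK (ν x : ℝ) : ℝ :=
  ∫ t in Set.Ioi (0:ℝ), Real.exp (-x * Real.cosh t) * Real.cosh (ν * t)

open Set

section GammaSubstitution

variable {ν b : ℝ}

lemma integrableOn_rpow_sub_one_mul_exp_neg_mul (hν : 0 < ν) (hb : 0 < b) :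
    IntegrableOn (fun u : ℝ => u ^ (ν - 1) * exp (-(b * u))) (Ioi 0) := by
  simpa using integrableOn_rpow_mul_exp_neg_mul_rpow (by linarith) one_pos hb

lemma integrableOn_exp_mul_rpow_mul_exp_neg (hν : 0 < ν) (hb : 0 < b) :
    IntegrableOn (fun t => exp t * (exp t ^ (ν - 1) * exp (-(b * exp t)))) (Ioi 0) := by
  have h := (integrableOn_rpow_sub_one_mul_exp_neg_mul hν hb).mono_set
    (Ioi_subset_Ioi (exp_zero.trans_ge zero_le_one))
  simpa using (integrableOn_comp_exp_Ioi (fun u => u ^ (ν - 1) * exp (-(b * u))) 0).mpr h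

lemma integral_exp_mul_rpow_mul_exp_neg_le (hν : 0 < ν) (hb : 0 < b) :
    ∫ t in Ioi 0, exp t * (exp t ^ (ν - 1) * exp (-(b * exp t))) ≤ (1 / b) ^ ν * Gamma ν := by
  rw [← integral_rpow_mul_exp_neg_mul_Ioi hν hb]
  have := integral_comp_exp_Ioi (fun u => u ^ (ν - 1) * exp (-(b * u))) 0
  simp only [smul_eq_mul, exp_zero] at this
  rw [this]
  refine setIntegral_mono_set (integrableOn_rpow_sub_one_mul_exp_neg_mul hν hb) ?_
    (Ioi_subset_Ioi zero_le_one).eventuallyLE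
  filter_upwards [self_mem_ae_restrict measurableSet_Ioi] with u (hu : 0 < u)
  positivity

end GammaSubstitution

section BesselK

variable {ν x : ℝ}

lemma besselK_nonneg (ν x : ℝ) : 0 ≤ besselK ν x :=
  setIntegral_nonneg measurableSet_Ioi fun _ _ => by positivity

lemma measurable_besselK (ν : ℝ) : Measurable (besselK ν) :=
  (StronglyMeasurable.integral_prod_right'
    (f := fun p : ℝ × ℝ => exp (-p.1 * cosh p.2) * cosh (ν * p.2))
    (by fun_prop : Continuous _).stronglyMeasurable).measurable

lemma exp_neg_mul_cosh_mul_cosh_le (hν : 0 ≤ ν) (hx : 0 ≤ x) {t : ℝ} (ht : 0 ≤ t) :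
    exp (-x * cosh t) * cosh (ν * t) ≤
      exp (-(x / 2)) * (exp t * (exp t ^ (ν - 1) * exp (-(x / 4 * exp t)))) := by
  have hcosh_ge : 1 / 2 + exp t / 4 ≤ cosh t := by
    have := one_le_cosh t
    rw [cosh_eq] at this ⊢
    linarith [exp_pos (-t)]
  have hcosh_le : cosh (ν * t) ≤ exp (ν * t) := by
    rw [cosh_eq]
    linarith [exp_le_exp.mpr (by nlinarith : -(ν * t) ≤ ν * t)]
  have hexp : exp (ν * t) = exp t * exp t ^ (ν - 1) := by
    rw [← exp_mul, ← exp_add]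
    ring_nf
  calc exp (-x * cosh t) * cosh (ν * t)
      ≤ exp (-(x / 2) + -(x / 4 * exp t)) * exp (ν * t) := by
        gcongr
        nlinarith
    _ = _ := by rw [hexp, exp_add]; ring

lemma integrableOn_besselK_integrand (hν : 0 < ν) (hx : 0 < x) :
    IntegrableOn (fun t => exp (-x * cosh t) * cosh (ν * t)) (Ioi 0) := by
  refine Integrable.mono' ((integrableOn_exp_mul_rpow_mul_exp_neg hν (by positivity :
    0 < x / 4)).const_mul (exp (-(x / 2)))) (by fun_prop : Continuous _).aestronglyMeasurable ?_
  filter_upwards [self_mem_ae_restrict measurableSet_Ioi] with t (ht : 0 < t)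
  rw [Real.norm_of_nonneg (by positivity)]
  exact exp_neg_mul_cosh_mul_cosh_le hν.le hx.le ht.le

lemma besselK_le (hν : 0 < ν) (hx : 0 < x) :
    besselK ν x ≤ exp (-(x / 2)) * ((4 / x) ^ ν * Gamma ν) := by
  have hx4 : 0 < x / 4 := by positivity
  calc besselK ν x
      ≤ ∫ t in Ioi 0, exp (-(x / 2)) * (exp t * (exp t ^ (ν - 1) * exp (-(x / 4 * exp t)))) :=
        setIntegral_mono_on (integrableOn_besselK_integrand hν hx)
          ((integrableOn_exp_mul_rpow_mul_exp_neg hν hx4).const_mul _) measurableSet_Ioi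
          fun t ht => exp_neg_mul_cosh_mul_cosh_le hν.le hx.le ht.le
    _ ≤ exp (-(x / 2)) * ((1 / (x / 4)) ^ ν * Gamma ν) := by
        rw [integral_const_mul]
        gcongr
        exact integral_exp_mul_rpow_mul_exp_neg_le hν hx4
    _ = exp (-(x / 2)) * ((4 / x) ^ ν * Gamma ν) := by rw [one_div_div]

lemma exp_neg_mul_cosh_one_le_besselK (hν : 0 < ν) (hx : 0 < x) :
    exp (-(x * cosh 1)) ≤ besselK ν x := by
  have hint := integrableOn_besselK_integrand hν hx
  calc exp (-(x * cosh 1))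
      = ∫ _ in Ioc (0 : ℝ) 1, exp (-(x * cosh 1)) := by simp
    _ ≤ ∫ t in Ioc (0 : ℝ) 1, exp (-x * cosh t) * cosh (ν * t) := by
        refine setIntegral_mono_on (integrableOn_const measure_Ioc_lt_top.ne)
          (hint.mono_set Ioc_subset_Ioi_self) measurableSet_Ioc fun t ht => ?_
        have hcosh : cosh t ≤ cosh 1 := by
          rw [cosh_le_cosh, abs_of_pos ht.1, abs_one]
          exact ht.2
        calc exp (-(x * cosh 1)) = exp (-(x * cosh 1)) * 1 := (mul_one _).symm
          _ ≤ exp (-x * cosh t) * cosh (ν * t) := by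
            gcongr
            · nlinarith
            · exact one_le_cosh _
    _ ≤ besselK ν x :=
        setIntegral_mono_set hint (Eventually.of_forall fun _ => by positivity)
          Ioc_subset_Ioi_self.eventuallyLE

end BesselK

lemma cosh_one_lt : cosh 1 < 8 / 5 := by
  rw [cosh_eq]
  linarith [exp_one_lt_d9, exp_neg_one_lt_d9]

section KappaIntegrals

variable {ν : ℝ}

lemma rpow_mul_besselK_sq_le (hν : 0 < ν) {κ : ℝ} (hκ : 0 < κ) :
    κ ^ (2 * ν) * besselK ν (κ ^ 2) ≤ 4 ^ ν * Gamma ν * exp (-(κ ^ 2 / 2)) := by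
  have hκ2 : 0 < κ ^ 2 := by positivity
  have hpow : (4 / κ ^ 2) ^ ν = 4 ^ ν / κ ^ (2 * ν) := by
    rw [div_rpow (by norm_num) hκ2.le, ← rpow_natCast, ← rpow_mul hκ.le, Nat.cast_ofNat]
  calc κ ^ (2 * ν) * besselK ν (κ ^ 2)
      ≤ κ ^ (2 * ν) * (exp (-(κ ^ 2 / 2)) * ((4 / κ ^ 2) ^ ν * Gamma ν)) := by
        gcongr
        exact besselK_le hν hκ2
    _ = 4 ^ ν * Gamma ν * exp (-(κ ^ 2 / 2)) := by
        rw [hpow]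
        field_simp [(rpow_pos_of_pos hκ (2 * ν)).ne']

lemma integrable_exp_mul_sub_sq_div_two (b : ℝ) :
    Integrable fun κ : ℝ => exp (b * κ + -(κ ^ 2 / 2)) := by
  have h := ((integrable_exp_neg_mul_sq (b := 1 / 2) (by norm_num)).comp_sub_right b).const_mul
    (exp (b ^ 2 / 2))
  refine h.congr (Eventually.of_forall fun κ => ?_)
  simp only [← exp_add]
  ring_nf

lemma integrableOn_rpow_mul_exp_mul_besselK_sq (hν : 0 < ν) (b : ℝ) :
    IntegrableOn (fun κ => κ ^ (2 * ν) * exp (b * κ) * besselK ν (κ ^ 2)) (Ioi 0) := by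
  refine Integrable.mono' ((integrable_exp_mul_sub_sq_div_two b).const_mul
    (4 ^ ν * Gamma ν)).integrableOn ?_ ?_
  · refine ((ContinuousOn.aestronglyMeasurable ?_ measurableSet_Ioi).mul
      (by fun_prop : Continuous fun κ : ℝ => exp (b * κ)).aestronglyMeasurable).mul
      ((measurable_besselK ν).comp (measurable_id.pow_const 2)).aestronglyMeasurable
    exact fun κ hκ => (continuousAt_rpow_const κ _ (Or.inl (ne_of_gt hκ))).continuousWithinAt
  · filter_upwards [self_mem_ae_restrict measurableSet_Ioi] with κ (hκ : 0 < κ)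
    rw [Real.norm_of_nonneg (mul_nonneg (by positivity) (besselK_nonneg _ _)), exp_add]
    calc κ ^ (2 * ν) * exp (b * κ) * besselK ν (κ ^ 2)
        = exp (b * κ) * (κ ^ (2 * ν) * besselK ν (κ ^ 2)) := by ring
      _ ≤ exp (b * κ) * (4 ^ ν * Gamma ν * exp (-(κ ^ 2 / 2))) :=
        mul_le_mul_of_nonneg_left (rpow_mul_besselK_sq_le hν hκ) (exp_nonneg _)
      _ = _ := by ring

lemma integrableOn_rpow_mul_besselK_sq (hν : 0 < ν) :
    IntegrableOn (fun κ => κ ^ (2 * ν) * besselK ν (κ ^ 2)) (Ioi 0) := by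
  simpa using integrableOn_rpow_mul_exp_mul_besselK_sq hν 0

lemma exp_sq_div_eight_add_le_integral (hν : 0 < ν) {w : ℝ} (hw : 64 ≤ w) :
    exp (w ^ 2 / 8 + w / 2) ≤
      ∫ κ in Ioi 0, κ ^ (2 * ν) * exp (w * κ) * besselK ν (κ ^ 2) := by
  have hint := integrableOn_rpow_mul_exp_mul_besselK_sq hν w
  have hIcc : Icc (w / 4) (w / 4 + 1) ⊆ Ioi 0 := fun κ hκ => by
    simp only [mem_Ioi]; linarith [hκ.1]
  have hpoint : ∀ κ ∈ Icc (w / 4) (w / 4 + 1),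
      exp (w ^ 2 / 8 + w / 2) ≤ κ ^ (2 * ν) * exp (w * κ) * besselK ν (κ ^ 2) := by
    rintro κ ⟨hκl, hκu⟩
    have hκ1 : 1 ≤ κ := by linarith
    have hexponent : w ^ 2 / 8 + w / 2 ≤ w * κ + -(κ ^ 2 * cosh 1) := by
      have hsq : κ ^ 2 * cosh 1 ≤ (w / 4 + 1) ^ 2 * (8 / 5) := by
        gcongr
        exact cosh_one_lt.le
      nlinarith
    calc exp (w ^ 2 / 8 + w / 2)
        ≤ exp (w * κ) * exp (-(κ ^ 2 * cosh 1)) := by rw [← exp_add]; exact exp_le_exp.mpr hexponent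
      _ ≤ exp (w * κ) * besselK ν (κ ^ 2) :=
        mul_le_mul_of_nonneg_left (exp_neg_mul_cosh_one_le_besselK hν (by positivity))
          (exp_nonneg _)
      _ ≤ κ ^ (2 * ν) * (exp (w * κ) * besselK ν (κ ^ 2)) :=
        le_mul_of_one_le_left (mul_nonneg (exp_nonneg _) (besselK_nonneg _ _))
          (one_le_rpow hκ1 (by positivity))
      _ = κ ^ (2 * ν) * exp (w * κ) * besselK ν (κ ^ 2) := (mul_assoc _ _ _).symm
  calc exp (w ^ 2 / 8 + w / 2)
      = ∫ _ in Icc (w / 4) (w / 4 + 1), exp (w ^ 2 / 8 + w / 2) := by simp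
    _ ≤ ∫ κ in Icc (w / 4) (w / 4 + 1), κ ^ (2 * ν) * exp (w * κ) * besselK ν (κ ^ 2) :=
        setIntegral_mono_on (integrableOn_const measure_Icc_lt_top.ne) (hint.mono_set hIcc)
          measurableSet_Icc hpoint
    _ ≤ ∫ κ in Ioi 0, κ ^ (2 * ν) * exp (w * κ) * besselK ν (κ ^ 2) := by
        refine setIntegral_mono_set hint ?_ hIcc.eventuallyLE
        filter_upwards [self_mem_ae_restrict measurableSet_Ioi] with κ (hκ : 0 < κ)
        exact mul_nonneg (by positivity) (besselK_nonneg _ _)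

lemma integral_rpow_mul_exp_mul_besselK_sq_sub_le (hν : 0 < ν) (v : ℝ) :
    (∫ κ in Ioi 0, κ ^ (2 * ν) * exp (-v * κ) * besselK ν (κ ^ 2)) -
        2 * ∫ κ in Ioi 0, κ ^ (2 * ν) * besselK ν (κ ^ 2) ≤
      ∫ κ in Ioi 0, κ ^ (2 * ν) * (exp (-v * κ) - cos (v * κ) - sin (v * κ)) *
        besselK ν (κ ^ 2) := by
  have hF := integrableOn_rpow_mul_besselK_sq hν
  have htrig : ∀ κ, ‖cos (v * κ) + sin (v * κ)‖ ≤ 2 := fun κ => by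
    rw [Real.norm_eq_abs]
    linarith [abs_add_le (cos (v * κ)) (sin (v * κ)), abs_cos_le_one (v * κ),
      abs_sin_le_one (v * κ)]
  have hosc : IntegrableOn
      (fun κ => (cos (v * κ) + sin (v * κ)) * (κ ^ (2 * ν) * besselK ν (κ ^ 2))) (Ioi 0) :=
    hF.bdd_mul (by fun_prop : Continuous _).aestronglyMeasurable (Eventually.of_forall htrig)
  have hbound : ‖∫ κ in Ioi 0, (cos (v * κ) + sin (v * κ)) * (κ ^ (2 * ν) * besselK ν (κ ^ 2))‖
      ≤ ∫ κ in Ioi 0, 2 * (κ ^ (2 * ν) * besselK ν (κ ^ 2)) := by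
    refine norm_integral_le_of_norm_le (hF.const_mul 2) ?_
    filter_upwards [self_mem_ae_restrict measurableSet_Ioi] with κ (hκ : 0 < κ)
    rw [norm_mul, Real.norm_of_nonneg (mul_nonneg (by positivity) (besselK_nonneg _ _))]
    exact mul_le_mul_of_nonneg_right (htrig κ) (mul_nonneg (by positivity) (besselK_nonneg _ _))
  have hsplit : ∫ κ in Ioi 0, κ ^ (2 * ν) * (exp (-v * κ) - cos (v * κ) - sin (v * κ)) *
        besselK ν (κ ^ 2) =
      (∫ κ in Ioi 0, κ ^ (2 * ν) * exp (-v * κ) * besselK ν (κ ^ 2)) -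
        ∫ κ in Ioi 0, (cos (v * κ) + sin (v * κ)) * (κ ^ (2 * ν) * besselK ν (κ ^ 2)) := by
    rw [← integral_sub (integrableOn_rpow_mul_exp_mul_besselK_sq hν (-v)) hosc]
    congr 1 with κ
    ring
  rw [hsplit, ← integral_const_mul]
  linarith [(abs_le.mp (Real.norm_eq_abs _ ▸ hbound)).2]

lemma eventually_exp_sq_div_eight_add_one_le (hν : 0 < ν) :
    ∀ᶠ v in atBot, exp (v ^ 2 / 8) + 1 ≤
      ∫ κ in Ioi 0, κ ^ (2 * ν) * (exp (-v * κ) - cos (v * κ) - sin (v * κ)) *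
        besselK ν (κ ^ 2) := by
  set M := ∫ κ in Ioi 0, κ ^ (2 * ν) * besselK ν (κ ^ 2)
  have hM : 0 ≤ M := setIntegral_nonneg measurableSet_Ioi fun κ (hκ : 0 < κ) =>
    mul_nonneg (by positivity) (besselK_nonneg _ _)
  have hgrowth : Tendsto (fun v : ℝ => exp (-v / 2)) atBot atTop :=
    tendsto_exp_atTop.comp (tendsto_neg_atBot_atTop.atTop_div_const two_pos)
  filter_upwards [eventually_le_atBot (-64), hgrowth.eventually_ge_atTop (2 * M + 2)]
    with v hv hexp
  have hdominant := exp_sq_div_eight_add_le_integral hν (w := -v) (by linarith)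
  rw [neg_sq, exp_add] at hdominant
  have hone : 1 ≤ exp (v ^ 2 / 8) := one_le_exp (by positivity)
  nlinarith [integral_rpow_mul_exp_mul_besselK_sq_sub_le hν v]

end KappaIntegrals

theorem stmt18 (ζ : ℝ) (hζ : 1 < ζ) (P : ℝ → ℝ)
    (hP : ∀ v : ℝ, P v = ∫ κ in Set.Ioi (0:ℝ),
      κ ^ ((ζ - 1) / 2) * (Real.exp (-v * κ) - Real.cos (v * κ) - Real.sin (v * κ))
        * besselK ((ζ - 1) / 4) (κ ^ 2)) :
    (∀ v : ℝ, v < 0 → MeasureTheory.IntegrableOn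
        (fun κ => κ ^ ((ζ - 1) / 2) * Real.exp (|v| * κ) * besselK ((ζ - 1) / 4) (κ ^ 2))
        (Set.Ioi 0)) ∧
    Filter.Tendsto P Filter.atBot Filter.atTop ∧
    ∃ C > 0, ∃ V : ℝ, ∀ v : ℝ, v ≤ V → C * Real.exp (v ^ 2 / 8) ≤ P v := by
  have hν : 0 < (ζ - 1) / 4 := by linarith
  have hexponent : (ζ - 1) / 2 = 2 * ((ζ - 1) / 4) := by ring
  have hlower : ∀ᶠ v in atBot, exp (v ^ 2 / 8) + 1 ≤ P v := by
    simpa only [hP, hexponent] using eventually_exp_sq_div_eight_add_one_le hν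
  obtain ⟨V, hV⟩ := eventually_atBot.mp hlower
  refine ⟨fun v _ => hexponent ▸ integrableOn_rpow_mul_exp_mul_besselK_sq hν |v|, ?_,
    1, one_pos, V, fun v hv => by linarith [hV v hv]⟩
  have hsq : Tendsto (fun v : ℝ => v ^ 2) atBot atTop := by
    simpa [Function.comp_def] using
      (tendsto_pow_atTop two_ne_zero).comp (tendsto_neg_atBot_atTop (G := ℝ))
  have hgauss : Tendsto (fun v : ℝ => exp (v ^ 2 / 8)) atBot atTop :=
    tendsto_exp_atTop.comp (hsq.atTop_div_const (by norm_num))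
  exact tendsto_atTop_mono' atBot (hlower.mono fun v hv => by linarith) hgauss
end
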